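/- Fix positive integers I, J, K, R, D and reals q, α, β > 0. Let g : ℝ^D → ℝ^{I×J} be P-Lipschitz (Euclidean norm on ℝ^D, Frobenius norm on ℝ^{I×J}) with P > 0, and suppose ‖g(z)‖_F ≤ β for all z in Z = {z ∈ ℝ^D : ‖z‖₂ ≤ q}. Then for every ε with 0 < ε ≤ R(α+β)·min(α, Pq), the solution set X(R,g) admits an ε-net, with respect to the Frobenius norm on ℝ^{I×J×K}, of cardinality at most (3R(α+β)/ε)^{R(K+D)} · α^{RK} · (Pq)^{RD}. -/

import Mathlib

/-!
Volumetric nets: a maximal `δ`-separated subset of a ball of radius `ρ` in a `d`-dimensional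
space has at most `((2ρ + δ) / δ) ^ d ≤ (3ρ / δ) ^ d` points, because the disjoint `δ/2`-balls
around its points fit in the ball of radius `ρ + δ/2`, and by maximality it is a `δ`-net.
Take such nets of the latent ball (radius `δ_z`) and of the coefficient ball (radius `δ_c`) and
push the `R`-tuples of net points through `(z, c) ↦ ∑ r, g (z r) ∘ c r`. Since
`‖S ∘ c‖_F = ‖S‖_F ‖c‖₂` and `S ∘ c - S' ∘ c' = S ∘ (c - c') + (S - S') ∘ c'`, each summand moves
by at most `β δ_c + P δ_z α`; the choice `δ_c = ε / (R (α + β))`, `δ_z = δ_c / P` makes the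
total error `ε` and the count `(3α/δ_c)^{RK} (3q/δ_z)^{RD}`.
-/

/-- The Euclidean norm of a vector in `ℝ^n`. -/
noncomputable def euclNorm {n : ℕ} (x : Fin n → ℝ) : ℝ := Real.sqrt (∑ i, x i ^ 2)

/-- The Frobenius norm of a real matrix. -/
noncomputable def frobNorm {m n : ℕ} (X : Matrix (Fin m) (Fin n) ℝ) : ℝ :=
  Real.sqrt (∑ i, ∑ j, X i j ^ 2)

/-- The Frobenius (Euclidean) norm of a tensor in `ℝ^{I×J×K}`. -/
noncomputable def tnorm {I J K : ℕ} (X : Fin I → Fin J → Fin K → ℝ) : ℝ :=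
  Real.sqrt (∑ i, ∑ j, ∑ k, X i j k ^ 2)

/-- The solution set `X(R,g)`: all tensors `Σ_{r=1}^R g(z_r) ∘ c_r` with `‖z_r‖₂ ≤ q` and
`‖c_r‖₂ ≤ α`. -/
def solSet (I J K R D : ℕ) (q α : ℝ) (g : (Fin D → ℝ) → Matrix (Fin I) (Fin J) ℝ) :
    Set (Fin I → Fin J → Fin K → ℝ) :=
  {X | ∃ (z : Fin R → Fin D → ℝ) (c : Fin R → Fin K → ℝ),
    (∀ r, euclNorm (z r) ≤ q) ∧ (∀ r, euclNorm (c r) ≤ α) ∧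
    X = fun i j k => ∑ r, g (z r) i j * c r k}

open Metric MeasureTheory Module
open scoped NNReal ENNReal

theorem IsCompact.packingNumber_ne_top {X : Type*} [PseudoEMetricSpace X] {s : Set X} {ε : ℝ≥0}
    (hs : IsCompact s) (hε : ε ≠ 0) : packingNumber ε s ≠ ⊤ := by
  obtain ⟨N, -, hN, hcover⟩ :=
    exists_finite_isCover_of_isCompact (ε := ε / 2) (by simpa using hε) hs
  refine ne_top_of_le_ne_top hN.encard_lt_top.ne ?_
  calc packingNumber ε s = packingNumber (2 * (ε / 2)) s := by rw [mul_div_cancel₀ _ two_ne_zero]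
    _ ≤ externalCoveringNumber (ε / 2) s := packingNumber_two_mul_le_externalCoveringNumber _ _
    _ ≤ N.encard := hcover.externalCoveringNumber_le_encard

section NormedSpace

variable {E : Type*} [NormedAddCommGroup E] [NormedSpace ℝ E] [FiniteDimensional ℝ E]

theorem card_le_of_isSeparated_of_subset_closedBall {F : Finset E} {ρ : ℝ} {δ : ℝ≥0}
    (hρ : 0 ≤ ρ) (hδ : 0 < δ) (hF : (F : Set E) ⊆ closedBall 0 ρ)
    (hsep : IsSeparated (δ : ℝ≥0∞) (F : Set E)) :
    (F.card : ℝ) ≤ ((2 * ρ + δ) / δ) ^ finrank ℝ E := by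
  borelize E
  set μ : Measure E := Measure.addHaar
  have hr : (0 : ℝ) < δ / 2 := by positivity
  have hdisj : (F : Set E).PairwiseDisjoint fun x => ball x (δ / 2) := by
    intro x hx y hy hxy
    have : (δ : ℝ≥0∞) < edist x y := hsep hx hy hxy
    rw [edist_nndist, ENNReal.coe_lt_coe, ← NNReal.coe_lt_coe, coe_nndist] at this
    exact ball_disjoint_ball (by linarith)
  have hsub : (⋃ x ∈ F, ball x (δ / 2)) ⊆ ball (0 : E) (ρ + δ / 2) :=
    Set.iUnion₂_subset fun x hx => ball_subset_ball' (by
      linarith [mem_closedBall_zero_iff.1 (hF hx), dist_zero_right x])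
  have hvol : (F.card : ℝ≥0∞) * ENNReal.ofReal ((δ / 2) ^ finrank ℝ E) * μ (ball 0 1) ≤
      ENNReal.ofReal ((ρ + δ / 2) ^ finrank ℝ E) * μ (ball 0 1) := calc
    _ = μ (⋃ x ∈ F, ball x (δ / 2)) := by
      rw [measure_biUnion_finset hdisj fun x _ => measurableSet_ball]
      simp only [μ.addHaar_ball_of_pos _ hr, Finset.sum_const, nsmul_eq_mul, mul_assoc]
    _ ≤ μ (ball 0 (ρ + δ / 2)) := measure_mono hsub
    _ = _ := μ.addHaar_ball_of_pos _ (by positivity)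
  have := ENNReal.toReal_le_of_le_ofReal (by positivity)
    ((ENNReal.mul_le_mul_iff_left (measure_ball_pos μ _ one_pos).ne' measure_ball_lt_top.ne).1 hvol)
  rw [ENNReal.toReal_mul, ENNReal.toReal_ofReal (by positivity), ENNReal.toReal_natCast] at this
  rw [show (2 * ρ + δ) / δ = (ρ + δ / 2) / (δ / 2) by field_simp, div_pow,
    le_div_iff₀ (by positivity)]
  exact this

theorem exists_finset_isCover_closedBall {ρ : ℝ} {δ : ℝ≥0} (hδ : 0 < δ) (hδρ : δ ≤ ρ) :
    ∃ N : Finset E, (N : Set E) ⊆ closedBall 0 ρ ∧ IsCover δ (closedBall 0 ρ) (N : Set E) ∧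
      (N.card : ℝ) ≤ (3 * ρ / δ) ^ finrank ℝ E := by
  set C := maximalSeparatedSet δ (closedBall (0 : E) ρ)
  have hpack := (isCompact_closedBall (0 : E) ρ).packingNumber_ne_top hδ.ne'
  have hC : C.Finite := Set.encard_ne_top_iff.1 (encard_maximalSeparatedSet hpack ▸ hpack)
  have hρ : 0 ≤ ρ := δ.coe_nonneg.trans hδρ
  have hCsub : C ⊆ closedBall 0 ρ := maximalSeparatedSet_subset
  refine ⟨hC.toFinset, by simpa using hCsub, by simpa using isCover_maximalSeparatedSet hpack, ?_⟩
  refine (card_le_of_isSeparated_of_subset_closedBall hρ hδ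
    (by simpa using hCsub) (by simpa using isSeparated_maximalSeparatedSet)).trans ?_
  exact pow_le_pow_left₀ (by positivity) (by gcongr; linarith) _

end NormedSpace

theorem euclNorm_eq_norm_toLp {n : ℕ} (x : Fin n → ℝ) : euclNorm x = ‖WithLp.toLp 2 x‖ := by
  simp [euclNorm, EuclideanSpace.norm_eq]

theorem euclNorm_nonneg {n : ℕ} (x : Fin n → ℝ) : 0 ≤ euclNorm x := Real.sqrt_nonneg _

theorem frobNorm_nonneg {m n : ℕ} (S : Matrix (Fin m) (Fin n) ℝ) : 0 ≤ frobNorm S :=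
  Real.sqrt_nonneg _

theorem exists_finset_euclNorm_cover (n : ℕ) {ρ δ : ℝ} (hδ : 0 < δ) (hδρ : δ ≤ ρ) :
    ∃ N : Finset (Fin n → ℝ), (∀ y ∈ N, euclNorm y ≤ ρ) ∧
      (∀ x, euclNorm x ≤ ρ → ∃ y ∈ N, euclNorm (x - y) ≤ δ) ∧ (N.card : ℝ) ≤ (3 * ρ / δ) ^ n := by
  lift δ to ℝ≥0 using hδ.le
  obtain ⟨N, hNsub, hNcover, hNcard⟩ :=
    exists_finset_isCover_closedBall (E := EuclideanSpace ℝ (Fin n)) (mod_cast hδ) hδρ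
  refine ⟨N.image WithLp.ofLp, ?_, fun x hx => ?_, ?_⟩
  · simp only [Finset.forall_mem_image]
    intro y hy
    simpa [euclNorm_eq_norm_toLp] using hNsub hy
  · have := isCover_iff_subset_iUnion_closedBall.1 hNcover
      (show WithLp.toLp 2 x ∈ closedBall 0 ρ by simpa [euclNorm_eq_norm_toLp] using hx)
    simp only [Set.mem_iUnion₂, mem_closedBall, dist_eq_norm] at this
    obtain ⟨y, hy, hxy⟩ := this
    exact ⟨y.ofLp, Finset.mem_image_of_mem _ hy, by simpa [euclNorm_eq_norm_toLp] using hxy⟩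
  · rw [Finset.card_image_of_injective _ (WithLp.ofLp_injective 2)]
    simpa using hNcard

section Tensor

variable {I J K : ℕ}

def outerProd (S : Matrix (Fin I) (Fin J) ℝ) (c : Fin K → ℝ) : Fin I → Fin J → Fin K → ℝ :=
  fun i j k => S i j * c k

variable (I J K) in
def tensorToLp : (Fin I → Fin J → Fin K → ℝ) →ₗ[ℝ] EuclideanSpace ℝ (Fin I × Fin J × Fin K) where
  toFun X := WithLp.toLp 2 fun p => X p.1 p.2.1 p.2.2
  map_add' _ _ := rfl
  map_smul' _ _ := rfl

theorem tnorm_eq_norm_tensorToLp (X : Fin I → Fin J → Fin K → ℝ) :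
    tnorm X = ‖tensorToLp I J K X‖ := by
  simp only [tnorm, EuclideanSpace.norm_eq, Fintype.sum_prod_type, Real.norm_eq_abs, sq_abs]
  rfl

theorem tnorm_add_le (X Y : Fin I → Fin J → Fin K → ℝ) : tnorm (X + Y) ≤ tnorm X + tnorm Y := by
  simpa only [tnorm_eq_norm_tensorToLp, map_add] using norm_add_le _ _

theorem tnorm_sum_le {ι : Type*} (s : Finset ι) (X : ι → Fin I → Fin J → Fin K → ℝ) :
    tnorm (∑ r ∈ s, X r) ≤ ∑ r ∈ s, tnorm (X r) := by
  simpa only [tnorm_eq_norm_tensorToLp, map_sum] using norm_sum_le s _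

theorem tnorm_outerProd (S : Matrix (Fin I) (Fin J) ℝ) (c : Fin K → ℝ) :
    tnorm (outerProd S c) = frobNorm S * euclNorm c := by
  rw [tnorm, frobNorm, euclNorm, ← Real.sqrt_mul (by positivity)]
  simp_rw [outerProd, mul_pow, Finset.sum_mul, Finset.mul_sum]

theorem outerProd_sub_outerProd (S S' : Matrix (Fin I) (Fin J) ℝ) (c c' : Fin K → ℝ) :
    outerProd S c - outerProd S' c' = outerProd S (c - c') + outerProd (S - S') c' := by
  ext
  simp only [outerProd, Pi.sub_apply, Pi.add_apply, Matrix.sub_apply]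
  ring

end Tensor

section LowRank

variable {I J K R D : ℕ} (g : (Fin D → ℝ) → Matrix (Fin I) (Fin J) ℝ)

def lowRankTensor (z : Fin R → Fin D → ℝ) (c : Fin R → Fin K → ℝ) : Fin I → Fin J → Fin K → ℝ :=
  ∑ r, outerProd (g (z r)) (c r)

theorem mem_solSet_iff {q α : ℝ} {X : Fin I → Fin J → Fin K → ℝ} :
    X ∈ solSet I J K R D q α g ↔ ∃ (z : Fin R → Fin D → ℝ) (c : Fin R → Fin K → ℝ),
      (∀ r, euclNorm (z r) ≤ q) ∧ (∀ r, euclNorm (c r) ≤ α) ∧ X = lowRankTensor g z c := by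
  have hlowRank (z : Fin R → Fin D → ℝ) (c : Fin R → Fin K → ℝ) :
      lowRankTensor g z c = fun i j k => ∑ r, g (z r) i j * c r k := by
    ext
    simp [lowRankTensor, outerProd, Finset.sum_apply]
  simp only [solSet, Set.mem_ofPred_eq, hlowRank]

theorem tnorm_lowRankTensor_sub_le {P α β δz δc : ℝ} (hP : 0 ≤ P)
    (hLip : ∀ z z' : Fin D → ℝ, frobNorm (g z - g z') ≤ P * euclNorm (z - z'))
    {z z' : Fin R → Fin D → ℝ} {c c' : Fin R → Fin K → ℝ}
    (hg : ∀ r, frobNorm (g (z r)) ≤ β) (hc' : ∀ r, euclNorm (c' r) ≤ α)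
    (hz : ∀ r, euclNorm (z r - z' r) ≤ δz) (hc : ∀ r, euclNorm (c r - c' r) ≤ δc) :
    tnorm (lowRankTensor g z c - lowRankTensor g z' c') ≤ R * (β * δc + P * δz * α) := calc
  _ = tnorm (∑ r, (outerProd (g (z r)) (c r - c' r) + outerProd (g (z r) - g (z' r)) (c' r))) := by
    simp only [lowRankTensor, ← Finset.sum_sub_distrib, outerProd_sub_outerProd]
  _ ≤ ∑ r, (frobNorm (g (z r)) * euclNorm (c r - c' r) +
        frobNorm (g (z r) - g (z' r)) * euclNorm (c' r)) := by
    refine (tnorm_sum_le _ _).trans (Finset.sum_le_sum fun r _ => ?_)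
    exact (tnorm_add_le _ _).trans_eq (by rw [tnorm_outerProd, tnorm_outerProd])
  _ ≤ ∑ _r : Fin R, (β * δc + P * δz * α) := by
    refine Finset.sum_le_sum fun r _ => add_le_add ?_ ?_
    · exact mul_le_mul (hg r) (hc r) (euclNorm_nonneg _) ((frobNorm_nonneg _).trans (hg r))
    · refine mul_le_mul ((hLip _ _).trans (by gcongr; exact hz r)) (hc' r) (euclNorm_nonneg _) ?_
      exact (frobNorm_nonneg _).trans ((hLip _ _).trans (by gcongr; exact hz r))
  _ = _ := by rw [Finset.sum_const, Finset.card_univ, Fintype.card_fin, nsmul_eq_mul]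

theorem exists_finset_solSet_cover {q α β P δz δc : ℝ} (hP : 0 ≤ P)
    (hLip : ∀ z z' : Fin D → ℝ, frobNorm (g z - g z') ≤ P * euclNorm (z - z'))
    (hbd : ∀ z : Fin D → ℝ, euclNorm z ≤ q → frobNorm (g z) ≤ β)
    (hδz : 0 < δz) (hδzq : δz ≤ q) (hδc : 0 < δc) (hδcα : δc ≤ α) :
    ∃ N : Finset (Fin I → Fin J → Fin K → ℝ), (↑N ⊆ solSet I J K R D q α g) ∧
      (∀ X ∈ solSet I J K R D q α g, ∃ Y ∈ N, tnorm (X - Y) ≤ R * (β * δc + P * δz * α)) ∧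
      (N.card : ℝ) ≤ (3 * q / δz) ^ (R * D) * (3 * α / δc) ^ (R * K) := by
  classical
  have hq : 0 ≤ q := hδz.le.trans hδzq
  have hα : 0 ≤ α := hδc.le.trans hδcα
  obtain ⟨Nz, hNz, hNz_cover, hNz_card⟩ := exists_finset_euclNorm_cover D hδz hδzq
  obtain ⟨Nc, hNc, hNc_cover, hNc_card⟩ := exists_finset_euclNorm_cover K hδc hδcα
  refine ⟨(Fintype.piFinset (fun _ : Fin R => Nz) ×ˢ Fintype.piFinset (fun _ : Fin R => Nc)).image
    fun p => lowRankTensor g p.1 p.2, ?_, fun X hX => ?_, ?_⟩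
  · intro Y hY
    simp only [Finset.coe_image, Set.mem_image, Finset.mem_coe, Finset.mem_product,
      Fintype.mem_piFinset] at hY
    obtain ⟨⟨z, c⟩, ⟨hz, hc⟩, rfl⟩ := hY
    exact (mem_solSet_iff g).2 ⟨z, c, fun r => hNz _ (hz r), fun r => hNc _ (hc r), rfl⟩
  · obtain ⟨z, c, hz, hc, rfl⟩ := (mem_solSet_iff g).1 hX
    choose z' hz' hzz' using fun r => hNz_cover (z r) (hz r)
    choose c' hc' hcc' using fun r => hNc_cover (c r) (hc r)
    refine ⟨lowRankTensor g z' c', Finset.mem_image.2 ⟨(z', c'),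
      Finset.mem_product.2 ⟨Fintype.mem_piFinset.2 hz', Fintype.mem_piFinset.2 hc'⟩, rfl⟩, ?_⟩
    exact tnorm_lowRankTensor_sub_le g hP hLip (fun r => hbd _ (hz r)) (fun r => hNc _ (hc' r))
      hzz' hcc'
  · calc _ ≤ ((Nz.card ^ R * Nc.card ^ R : ℕ) : ℝ) := by
          gcongr
          exact Finset.card_image_le.trans (by simp [Finset.card_product, Fintype.card_piFinset])
      _ ≤ ((3 * q / δz) ^ D) ^ R * ((3 * α / δc) ^ K) ^ R := by
          push_cast
          gcongr
      _ = _ := by ring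

end LowRank

theorem solution_set_covering_general (I J K R D : ℕ) (hR : 0 < R)
    (q α β P ε : ℝ) (hα : 0 < α) (hβ : 0 < β) (hP : 0 < P)
    (g : (Fin D → ℝ) → Matrix (Fin I) (Fin J) ℝ)
    (hLip : ∀ z z' : Fin D → ℝ, frobNorm (g z - g z') ≤ P * euclNorm (z - z'))
    (hbd : ∀ z : Fin D → ℝ, euclNorm z ≤ q → frobNorm (g z) ≤ β)
    (hε : 0 < ε) (hεle : ε ≤ R * (α + β) * min α (P * q)) :
    ∃ N : Finset (Fin I → Fin J → Fin K → ℝ),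
      (↑N ⊆ solSet I J K R D q α g) ∧
      (∀ X ∈ solSet I J K R D q α g, ∃ Y ∈ N, tnorm (X - Y) ≤ ε) ∧
      (N.card : ℝ) ≤
        (3 * R * (α + β) / ε) ^ (R * (K + D)) * α ^ (R * K) * (P * q) ^ (R * D) := by
  have hscale : 0 < (R : ℝ) * (α + β) := by positivity
  set δ := ε / (R * (α + β))
  have hδ : 0 < δ := by positivity
  have hεδ : ε = R * (α + β) * δ := by simp only [δ]; field_simp
  have hδα : δ ≤ α :=
    le_of_mul_le_mul_left (hεδ ▸ hεle.trans (by gcongr; exact min_le_left _ _)) hscale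
  have hδPq : δ ≤ P * q :=
    le_of_mul_le_mul_left (hεδ ▸ hεle.trans (by gcongr; exact min_le_right _ _)) hscale
  obtain ⟨N, hNsub, hNcover, hNcard⟩ := exists_finset_solSet_cover g hP.le hLip hbd
    (div_pos hδ hP) ((div_le_iff₀' hP).2 hδPq) hδ hδα
  refine ⟨N, hNsub, fun X hX => ?_, hNcard.trans_eq ?_⟩
  · obtain ⟨Y, hY, hXY⟩ := hNcover X hX
    exact ⟨Y, hY, hXY.trans_eq (by rw [hεδ]; field_simp; ring)⟩
  · have h3 : 3 * R * (α + β) / ε = 3 / δ := by rw [hεδ]; field_simp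
    rw [h3, show 3 * q / (δ / P) = 3 / δ * (P * q) by field_simp,
      show 3 * α / δ = 3 / δ * α by ring, mul_pow, mul_pow, mul_add, pow_add]
    ring

/-- Covering number bound for the deep-generative-model-constrained solution set: for a
`P`-Lipschitz generator `g` with `‖g(z)‖_F ≤ β` on the latent ball, `X(R,g)` admits an
`ε`-net of cardinality at most `(3R(α+β)/ε)^{R(K+D)} α^{RK} (Pq)^{RD}`. -/
theorem solution_set_covering (I J K R D : ℕ)
    (hI : 0 < I) (hJ : 0 < J) (hK : 0 < K) (hR : 0 < R) (hD : 0 < D)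
    (q α β P ε : ℝ) (hq : 0 < q) (hα : 0 < α) (hβ : 0 < β) (hP : 0 < P)
    (g : (Fin D → ℝ) → Matrix (Fin I) (Fin J) ℝ)
    (hLip : ∀ z z' : Fin D → ℝ, frobNorm (g z - g z') ≤ P * euclNorm (z - z'))
    (hbd : ∀ z : Fin D → ℝ, euclNorm z ≤ q → frobNorm (g z) ≤ β)
    (hε : 0 < ε) (hεle : ε ≤ R * (α + β) * min α (P * q)) :
    ∃ N : Finset (Fin I → Fin J → Fin K → ℝ),
      (↑N ⊆ solSet I J K R D q α g) ∧
      (∀ X ∈ solSet I J K R D q α g, ∃ Y ∈ N, tnorm (X - Y) ≤ ε) ∧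
      (N.card : ℝ) ≤
        (3 * R * (α + β) / ε) ^ (R * (K + D)) * α ^ (R * K) * (P * q) ^ (R * D) :=
  solution_set_covering_general I J K R D hR q α β P ε hα hβ hP g hLip hbd hε hεle
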